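/- MV-Sketch with r = log₂(1/δ) rows and w = 2/ε columns reports every heavy hitter x with S(x) ≥ φS with probability at least 1 − δ, provided φ ≥ ε. Concretely, the probability that x fails to be the majority flow (S(x) > V_i/2) in all of its r hashed buckets is at most (1/2)^r = δ. -/

import Mathlib

/-!
The value of the bucket of `x` in row `i` is `S(x)` plus the mass of the other flows hashed
to the same bucket. Pairwise independence makes each `y ≠ x` collide with `x` with
probability at most `1/w = ε/2`, so the expected collision mass is at most `εS/2 ≤ S(x)/2`,
and by Markov's inequality `x` fails to be the majority flow of its bucket with probability
at most `1/2`. The rows are independent, so `x` fails in all `r` rows with probability at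
most `(1/2)^r`.
-/

/-- State of a bucket in MV-Sketch: total value `V`, candidate key `K`,
indicator counter `C`. -/
structure Bucket (α : Type*) where
  V : ℝ
  K : α
  C : ℝ

/-- One update of the generalized majority vote algorithm on input `(y, v)`. -/
noncomputable def Bucket.step {α : Type*} [DecidableEq α] (b : Bucket α) (p : α × ℝ) :
    Bucket α :=
  if p.1 = b.K then ⟨b.V + p.2, b.K, b.C + p.2⟩
  else if b.C - p.2 < 0 then ⟨b.V + p.2, p.1, p.2 - b.C⟩
  else ⟨b.V + p.2, b.K, b.C - p.2⟩

/-- State of the bucket after processing the whole stream `l`, starting from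
an arbitrary initial key `k0`, `V = 0`, `C = 0`. -/
noncomputable def runBucket {α : Type*} [DecidableEq α] (k0 : α) (l : List (α × ℝ)) :
    Bucket α :=
  l.foldl Bucket.step ⟨0, k0, 0⟩

/-- Total value of flow `x` in the stream `l`. -/
def flowSum {α : Type*} [DecidableEq α] (x : α) (l : List (α × ℝ)) : ℝ :=
  ((l.filter fun p => p.1 = x).map Prod.snd).sum

open MeasureTheory ProbabilityTheory

open Finset
open scoped ENNReal

section Bucket

variable {α : Type*} [DecidableEq α]

lemma Bucket.step_V (b : Bucket α) (p : α × ℝ) : (b.step p).V = b.V + p.2 := by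
  unfold Bucket.step
  split_ifs <;> rfl

lemma foldl_step_V (l : List (α × ℝ)) (b : Bucket α) :
    (l.foldl Bucket.step b).V = b.V + (l.map Prod.snd).sum := by
  induction l generalizing b with
  | nil => simp
  | cons p l ih =>
    rw [List.foldl_cons, ih, Bucket.step_V, List.map_cons, List.sum_cons, add_assoc]

lemma runBucket_V (k0 : α) (l : List (α × ℝ)) :
    (runBucket k0 l).V = (l.map Prod.snd).sum := by
  rw [runBucket, foldl_step_V, zero_add]

lemma flowSum_nonneg {l : List (α × ℝ)} (hv : ∀ p ∈ l, 0 ≤ p.2) (y : α) :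
    0 ≤ flowSum y l :=
  List.sum_nonneg fun v hv' => by
    obtain ⟨p, hp, rfl⟩ := List.mem_map.1 hv'
    exact hv p (List.mem_of_mem_filter hp)

lemma flowSum_cons (y : α) (p : α × ℝ) (l : List (α × ℝ)) :
    flowSum y (p :: l) = (if p.1 = y then p.2 else 0) + flowSum y l := by
  by_cases h : p.1 = y <;> simp [flowSum, h]

variable [Fintype α]

lemma sum_filter_map_snd_eq_sum_flowSum (q : α → Prop) [DecidablePred q] (l : List (α × ℝ)) :
    ((l.filter fun p => q p.1).map Prod.snd).sum = ∑ y ∈ univ.filter q, flowSum y l := by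
  induction l with
  | nil => simp [flowSum]
  | cons p l ih =>
    simp only [flowSum_cons, sum_add_distrib, ← ih, sum_ite_eq, mem_filter, mem_univ, true_and]
    by_cases h : q p.1 <;> simp [h]

lemma sum_flowSum (l : List (α × ℝ)) : ∑ y, flowSum y l = (l.map Prod.snd).sum := by
  simpa using (sum_filter_map_snd_eq_sum_flowSum (fun _ => True) l).symm

lemma runBucket_filter_V {β : Type*} [DecidableEq β] (k0 : α) (l : List (α × ℝ))
    (h : α → β) (x : α) :
    (runBucket k0 (l.filter fun p => h p.1 = h x)).V =
      flowSum x l + ∑ y ∈ univ.erase x, if h y = h x then flowSum y l else 0 := by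
  rw [runBucket_V, sum_filter_map_snd_eq_sum_flowSum (fun y => h y = h x), sum_filter,
    ← add_sum_erase _ _ (mem_univ x), if_pos rfl]

end Bucket

lemma mul_meas_ge_le_sum_mul_measure {ι Ω : Type*} [MeasurableSpace Ω] (μ : Measure Ω)
    (s : Finset ι) (A : ι → Set Ω) (c : ι → ℝ≥0∞) (t : ℝ≥0∞) :
    t * μ {ω | t ≤ ∑ k ∈ s, (A k).indicator (fun _ => c k) ω} ≤ ∑ k ∈ s, c k * μ (A k) := by
  -- `A k` need not be measurable: pass to measurable hulls, which have the same measure.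
  set T := fun k => toMeasurable μ (A k)
  have hT : ∀ k, MeasurableSet (T k) := fun k => measurableSet_toMeasurable μ _
  calc t * μ {ω | t ≤ ∑ k ∈ s, (A k).indicator (fun _ => c k) ω}
      ≤ t * μ {ω | t ≤ ∑ k ∈ s, (T k).indicator (fun _ => c k) ω} := by
        gcongr t * μ ?_
        intro ω hω
        refine le_trans (b := ∑ k ∈ s, (A k).indicator (fun _ => c k) ω) hω
          (sum_le_sum fun k _ => ?_)
        exact Set.indicator_le_indicator_of_subset (subset_toMeasurable μ _) (fun _ => bot_le) ω
    _ ≤ ∫⁻ ω, ∑ k ∈ s, (T k).indicator (fun _ => c k) ω ∂μ :=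
        mul_meas_ge_le_lintegral
          (Finset.measurable_sum _ fun k _ => measurable_const.indicator (hT k)) t
    _ = ∑ k ∈ s, c k * μ (A k) := by
        rw [lintegral_finsetSum _ fun k _ => measurable_const.indicator (hT k)]
        simp only [lintegral_indicator_const (hT _), T, measure_toMeasurable]

lemma measure_collision_le {Ω α β : Type*} [MeasurableSpace Ω] [Fintype β] (μ : Measure Ω)
    (h : Ω → α → β) {p : ℝ≥0∞} (huniform : ∀ y j, μ {ω | h ω y = j} = p)
    (hpair : ∀ y z, y ≠ z → ∀ j j',
      μ {ω | h ω y = j ∧ h ω z = j'} = μ {ω | h ω y = j} * μ {ω | h ω z = j'})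
    {y z : α} (hyz : y ≠ z) :
    μ {ω | h ω y = h ω z} ≤ Fintype.card β * p ^ 2 := by
  have hunion : {ω | h ω y = h ω z} = ⋃ j, {ω | h ω y = j ∧ h ω z = j} := by
    ext ω
    simp only [Set.mem_ofPred_eq, Set.mem_iUnion]
    exact ⟨fun hyz => ⟨_, hyz, rfl⟩, fun ⟨_, hy, hz⟩ => hy.trans hz.symm⟩
  calc μ {ω | h ω y = h ω z} ≤ ∑ j, μ {ω | h ω y = j ∧ h ω z = j} :=
        hunion ▸ measure_iUnion_fintype_le μ _
    _ = Fintype.card β * p ^ 2 := by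
        simp [hpair y z hyz, huniform, sq]

lemma natCast_mul_ofReal_one_div_sq_le (w : ℕ) :
    (w : ℝ≥0∞) * ENNReal.ofReal (1 / w) ^ 2 ≤ ENNReal.ofReal (1 / w) := by
  rw [sq, ← mul_assoc, ← ENNReal.ofReal_natCast, ← ENNReal.ofReal_mul (Nat.cast_nonneg _)]
  refine mul_le_of_le_one_left bot_le (ENNReal.ofReal_le_one.2 ?_)
  rw [mul_one_div]
  exact div_self_le_one _

lemma measure_not_majority_le_half {Ω α β : Type*} [MeasurableSpace Ω] [Fintype α]
    [DecidableEq α] [DecidableEq β] (μ : Measure Ω) (h : Ω → α → β) (k0 x : α)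
    {l : List (α × ℝ)} (hv : ∀ p ∈ l, 0 ≤ p.2) (hx : 0 < flowSum x l) {q : ℝ≥0∞}
    (hcoll : ∀ y, y ≠ x → μ {ω | h ω y = h ω x} ≤ q)
    (hbudget : 2 * (ENNReal.ofReal (l.map Prod.snd).sum * q) ≤ ENNReal.ofReal (flowSum x l)) :
    μ {ω | flowSum x l ≤ (runBucket k0 (l.filter fun p => h ω p.1 = h ω x)).V / 2} ≤ 1 / 2 := by
  set a := ENNReal.ofReal (flowSum x l)
  set E := {ω | flowSum x l ≤ (runBucket k0 (l.filter fun p => h ω p.1 = h ω x)).V / 2}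
  set A := fun y => {ω | h ω y = h ω x}
  have hcollisions : E ⊆
      {ω | a ≤ ∑ y ∈ univ.erase x, (A y).indicator (fun _ => ENNReal.ofReal (flowSum y l)) ω} := by
    intro ω hω
    simp only [E, Set.mem_ofPred_eq, runBucket_filter_V] at hω
    have hle : flowSum x l ≤ ∑ y ∈ univ.erase x, if h ω y = h ω x then flowSum y l else 0 := by
      linarith
    refine (ENNReal.ofReal_le_ofReal hle).trans_eq ?_
    rw [ENNReal.ofReal_sum_of_nonneg fun y _ => by
      split_ifs
      exacts [flowSum_nonneg hv y, le_rfl]]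
    refine sum_congr rfl fun y _ => ?_
    by_cases hy : h ω y = h ω x <;> simp [A, hy]
  have hmarkov : a * μ E ≤ ENNReal.ofReal (l.map Prod.snd).sum * q :=
    calc a * μ E
        ≤ ∑ y ∈ univ.erase x, ENNReal.ofReal (flowSum y l) * μ (A y) :=
          (mul_le_mul' le_rfl (measure_mono hcollisions)).trans
            (mul_meas_ge_le_sum_mul_measure μ _ _ _ a)
      _ ≤ (∑ y ∈ univ.erase x, ENNReal.ofReal (flowSum y l)) * q := by
          rw [sum_mul]
          gcongr with y hy
          exact hcoll y (ne_of_mem_erase hy)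
      _ ≤ ENNReal.ofReal (l.map Prod.snd).sum * q := by
          rw [← sum_flowSum, ENNReal.ofReal_sum_of_nonneg fun y _ => flowSum_nonneg hv y]
          gcongr
          exact erase_subset _ _
  have ha0 : a ≠ 0 := by simpa [a] using hx
  rw [ENNReal.le_div_iff_mul_le (by simp) (by simp),
    ← ENNReal.mul_le_mul_iff_right ha0 ENNReal.ofReal_ne_top, mul_one]
  calc a * (μ E * 2) = 2 * (a * μ E) := by ring
    _ ≤ 2 * (ENNReal.ofReal (l.map Prod.snd).sum * q) := by gcongr
    _ ≤ a := hbudget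

lemma ofReal_one_sub_le_measure_compl {Ω : Type*} [MeasurableSpace Ω] {μ : Measure Ω}
    [IsProbabilityMeasure μ] {s : Set Ω} {δ : ℝ} (hδ : 0 ≤ δ) (hs : μ s ≤ ENNReal.ofReal δ) :
    ENNReal.ofReal (1 - δ) ≤ μ sᶜ := by
  rw [ENNReal.ofReal_sub _ hδ, ENNReal.ofReal_one, tsub_le_iff_right]
  calc 1 = μ (s ∪ sᶜ) := by rw [Set.union_compl_self, measure_univ]
    _ ≤ μ s + μ sᶜ := measure_union_le s sᶜ
    _ ≤ μ sᶜ + ENNReal.ofReal δ := by rw [add_comm]; gcongr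

theorem heavy_hitter_detection_bound_general {Ω : Type*} [MeasurableSpace Ω]
    (μ : Measure Ω) [IsProbabilityMeasure μ]
    (n r w : ℕ)
    (ε δ φ : ℝ)
    (hδ : δ = (1 / 2 : ℝ) ^ r) (hwε : (w : ℝ) = 2 / ε)
    (hφ0 : 0 < φ) (hφε : ε ≤ φ)
    (l : List (Fin n × ℝ)) (hv : ∀ p ∈ l, 0 ≤ p.2) (k0 x : Fin n)
    (hStot : 0 < (l.map Prod.snd).sum)
    (hheavy : φ * (l.map Prod.snd).sum ≤ flowSum x l)
    (g : Ω → Fin r → Fin n → Fin w)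
    (hrows : iIndepFun (fun i ω => g ω i) μ)
    (huniform : ∀ i y j, μ {ω | g ω i y = j} = ENNReal.ofReal (1 / (w : ℝ)))
    (hpair : ∀ (i : Fin r) (y z : Fin n), y ≠ z → ∀ j j',
      μ {ω | g ω i y = j ∧ g ω i z = j'} =
        μ {ω | g ω i y = j} * μ {ω | g ω i z = j'}) :
    μ {ω | ∀ i : Fin r,
        flowSum x l ≤ (runBucket k0 (l.filter fun p => g ω i p.1 = g ω i x)).V / 2}
      ≤ ENNReal.ofReal ((1 / 2 : ℝ) ^ r) ∧
    ENNReal.ofReal (1 - δ) ≤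
      μ {ω | ∃ i : Fin r,
        (runBucket k0 (l.filter fun p => g ω i p.1 = g ω i x)).V / 2 < flowSum x l} := by
  have hx : 0 < flowSum x l := (mul_pos hφ0 hStot).trans_le hheavy
  have hcoll : ∀ i y, y ≠ x → μ {ω | g ω i y = g ω i x} ≤ ENNReal.ofReal (1 / w) :=
    fun i y hy => (measure_collision_le μ (fun ω => g ω i) (huniform i) (hpair i) hy).trans
      (by rw [Fintype.card_fin]; exact natCast_mul_ofReal_one_div_sq_le w)
  have hbudget : 2 * (ENNReal.ofReal (l.map Prod.snd).sum * ENNReal.ofReal (1 / w)) ≤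
      ENNReal.ofReal (flowSum x l) := by
    rw [← ENNReal.ofReal_mul hStot.le, ← ENNReal.ofReal_ofNat, ← ENNReal.ofReal_mul zero_le_two]
    refine ENNReal.ofReal_le_ofReal ?_
    rw [hwε, one_div_div]
    nlinarith [mul_le_mul_of_nonneg_left hφε hStot.le]
  have hall : μ {ω | ∀ i : Fin r,
      flowSum x l ≤ (runBucket k0 (l.filter fun p => g ω i p.1 = g ω i x)).V / 2} ≤
        ENNReal.ofReal ((1 / 2 : ℝ) ^ r) := by
    rw [Set.ofPred_forall]
    refine (hrows.meas_iInter fun i => ⟨{h : Fin n → Fin w |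
      flowSum x l ≤ (runBucket k0 (l.filter fun p => h p.1 = h x)).V / 2}, .of_discrete,
        rfl⟩).trans_le ?_
    calc ∏ i : Fin r, _ ≤ ∏ _i : Fin r, (1 / 2 : ℝ≥0∞) := prod_le_prod' fun i _ =>
          measure_not_majority_le_half μ (fun ω => g ω i) k0 x hv hx (hcoll i) hbudget
      _ = ENNReal.ofReal ((1 / 2 : ℝ) ^ r) := by simp [ENNReal.ofReal_pow, ENNReal.inv_pow]
  refine ⟨hall, ?_⟩
  convert ofReal_one_sub_le_measure_compl (by rw [hδ]; positivity) (hδ ▸ hall) using 2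
  ext ω
  simp

/-- Heavy hitter detection bound of MV-Sketch with `r = log₂(1/δ)` rows and
`w = 2/ε` buckets per row: for a heavy hitter `x` (with `S(x) ≥ φ𝒮` and
`φ ≥ ε`), the probability that `x` fails to be the majority flow
(`S(x) > V_i/2`) in all of its `r` hashed buckets is at most `(1/2)^r = δ`;
hence `x` is the majority flow of some hashed bucket — and is thus stored and
reported — with probability at least `1 − δ`. -/
theorem heavy_hitter_detection_bound {Ω : Type*} [MeasurableSpace Ω]
    (μ : Measure Ω) [IsProbabilityMeasure μ]
    (n r w : ℕ) (hr : 0 < r) (hw : 0 < w)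
    (ε δ φ : ℝ) (hε0 : 0 < ε) (hε1 : ε < 1)
    (hδ : δ = (1 / 2 : ℝ) ^ r) (hwε : (w : ℝ) = 2 / ε)
    (hφ0 : 0 < φ) (hφ1 : φ < 1) (hφε : ε ≤ φ)
    (l : List (Fin n × ℝ)) (hv : ∀ p ∈ l, 0 ≤ p.2) (k0 x : Fin n)
    (hStot : 0 < (l.map Prod.snd).sum)
    (hheavy : φ * (l.map Prod.snd).sum ≤ flowSum x l)
    (g : Ω → Fin r → Fin n → Fin w)
    (hrows : iIndepFun (fun i ω => g ω i) μ)
    (huniform : ∀ i y j, μ {ω | g ω i y = j} = ENNReal.ofReal (1 / (w : ℝ)))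
    (hpair : ∀ (i : Fin r) (y z : Fin n), y ≠ z → ∀ j j',
      μ {ω | g ω i y = j ∧ g ω i z = j'} =
        μ {ω | g ω i y = j} * μ {ω | g ω i z = j'}) :
    μ {ω | ∀ i : Fin r,
        flowSum x l ≤ (runBucket k0 (l.filter fun p => g ω i p.1 = g ω i x)).V / 2}
      ≤ ENNReal.ofReal ((1 / 2 : ℝ) ^ r) ∧
    ENNReal.ofReal (1 - δ) ≤
      μ {ω | ∃ i : Fin r,
        (runBucket k0 (l.filter fun p => g ω i p.1 = g ω i x)).V / 2 < flowSum x l} :=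
  heavy_hitter_detection_bound_general μ n r w ε δ φ hδ hwε hφ0 hφε l hv k0 x hStot hheavy g hrows
    huniform hpair
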